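/- arXiv:2012.08484 — 5 statements merged into one kernel-verified Lean document; each statement's English description precedes it below -/
import Mathlib

section
/- If S ⊆ ℤ + 1/2 has S⁺ and S⁻ both finite, and c(S) = |S⁺| − |S⁻|, then the shifted set {s − c(S) : s ∈ S} is the Maya diagram of a (unique) partition. -/
/-!
Half-integers `m + 1/2` are encoded by integers `m`.

For every `d`, the number of elements of `S` at or above `d` minus the number of holes of `S`
below `d` equals `c(S) - d`: raising `d` by one either loses an element or gains a hole.
So `T = S - c(S)` has charge `0`. Listing its elements as `e₀ > e₁ > ⋯` and letting `λₙ` be the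
number of holes of `T` below `eₙ`, the identity at `d = eₙ` reads `λₙ - n - 1 = eₙ`; hence `λ`
is a partition with Maya diagram `T`. It is unique because for antitone `λ` the sequence
`λₙ - n - 1` is strictly decreasing, hence determined by its range.
-/

def IsPartitionFun (f : ℕ → ℕ) : Prop :=
  Antitone f ∧ ∃ N, ∀ n, N ≤ n → f n = 0

def maya (f : ℕ → ℕ) : Set ℤ :=
  {m | ∃ n : ℕ, m = (f n : ℤ) - n - 1}

def Spos (S : Set ℤ) : Set ℤ := {m | m ∈ S ∧ 0 ≤ m}

def Sneg (S : Set ℤ) : Set ℤ := {m | m ∉ S ∧ m < 0}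

noncomputable def charge (S : Set ℤ) : ℤ := ((Spos S).ncard : ℤ) - ((Sneg S).ncard : ℤ)

open Set

section Charge

variable {S : Set ℤ}

noncomputable def chargeAt (S : Set ℤ) (d : ℤ) : ℤ :=
  ((S ∩ Ici d).ncard : ℤ) - ((Sᶜ ∩ Iio d).ncard : ℤ)

lemma finite_inter_Ici (hp : (Spos S).Finite) (d : ℤ) : (S ∩ Ici d).Finite :=
  (hp.union (finite_Ico d 0)).subset fun s ⟨hs, hd⟩ =>
    (le_or_gt 0 s).imp (fun h => ⟨hs, h⟩) (fun h => ⟨hd, h⟩)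

lemma finite_compl_inter_Iio (hn : (Sneg S).Finite) (d : ℤ) : (Sᶜ ∩ Iio d).Finite :=
  (hn.union (finite_Ico 0 d)).subset fun m ⟨hm, hd⟩ =>
    (lt_or_ge m 0).imp (fun h => ⟨hm, h⟩) (fun h => ⟨h, hd⟩)

lemma chargeAt_add_one (hp : (Spos S).Finite) (hn : (Sneg S).Finite) (d : ℤ) :
    chargeAt S (d + 1) = chargeAt S d - 1 := by
  have hIci : Ici d = insert d (Ici (d + 1)) := by rw [Ici_add_one_eq_Ioi, Ioi_insert]
  have hIio : Iio (d + 1) = insert d (Iio d) := by rw [Iio_add_one_eq_Iic, Iio_insert]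
  unfold chargeAt
  rw [hIci, hIio]
  by_cases hd : d ∈ S
  · rw [inter_insert_of_mem hd, inter_insert_of_notMem (not_not_intro hd),
      ncard_insert_of_notMem (by simp) (finite_inter_Ici hp _)]
    push_cast
    ring
  · rw [inter_insert_of_notMem hd, inter_insert_of_mem hd,
      ncard_insert_of_notMem (by simp) (finite_compl_inter_Iio hn _)]
    push_cast
    ring

lemma chargeAt_eq (hp : (Spos S).Finite) (hn : (Sneg S).Finite) (d : ℤ) :
    chargeAt S d = charge S - d := by
  induction d using Int.induction_on with
  | zero => exact (sub_zero _).symm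
  | succ i ih => rw [chargeAt_add_one hp hn, ih]; ring
  | pred i ih =>
    have h := chargeAt_add_one hp hn (-i - 1)
    rw [sub_add_cancel, ih] at h
    linarith

lemma Spos_image_sub (S : Set ℤ) (c : ℤ) : Spos ((· - c) '' S) = (· - c) '' (S ∩ Ici c) := by
  rw [image_inter sub_left_injective, image_sub_const_Ici, sub_self]; rfl

lemma Sneg_image_sub (S : Set ℤ) (c : ℤ) : Sneg ((· - c) '' S) = (· - c) '' (Sᶜ ∩ Iio c) := by
  rw [image_inter sub_left_injective, image_sub_const_Iio, sub_self,
    image_compl_eq (f := (· - c)) (Equiv.subRight c).bijective]; rfl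

lemma charge_image_sub (S : Set ℤ) (c : ℤ) : charge ((· - c) '' S) = chargeAt S c := by
  rw [charge, Spos_image_sub, Sneg_image_sub, ncard_image_of_injective _ sub_left_injective,
    ncard_image_of_injective _ sub_left_injective, chargeAt]

end Charge

lemma exists_strictAnti_range_eq {T : Set ℤ} (hT : BddAbove T) (hT' : ¬ BddBelow T) :
    ∃ e : ℕ → ℤ, StrictAnti e ∧ range e = T := by
  obtain ⟨M, hM⟩ := hT
  set p : ℕ → Prop := fun k => M - k ∈ T
  have hM_sub : ∀ t ∈ T, M - ((M - t).toNat : ℤ) = t := fun t ht => by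
    have := hM ht
    omega
  have hp : (Set.ofPred p).Infinite := by
    refine infinite_of_not_bddAbove fun ⟨K, hK⟩ => hT' ⟨M - K, fun t ht => ?_⟩
    have : (M - t).toNat ≤ K := hK (show p _ by simp only [p, hM_sub t ht, ht])
    have := hM ht
    omega
  refine ⟨fun n => M - Nat.nth p n, fun m n hmn => ?_, ?_⟩
  · have := Nat.nth_strictMono hp hmn
    simp only
    omega
  · refine Subset.antisymm (range_subset_iff.2 (Nat.nth_mem_of_infinite hp)) fun t ht => ?_
    have : (M - t).toNat ∈ range (Nat.nth p) := by
      rw [Nat.range_nth_of_infinite hp]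
      simp only [Set.mem_ofPred, p, hM_sub t ht, ht]
    obtain ⟨n, hn⟩ := this
    exact ⟨n, by simp only [hn, hM_sub t ht]⟩

lemma StrictAnti.range_inter_Ici {α β : Type*} [LinearOrder α] [Preorder β] {e : α → β}
    (he : StrictAnti e) (a : α) :
    range e ∩ Ici (e a) = e '' Iic a := by
  ext t
  simp only [mem_inter_iff, mem_range, mem_Ici, mem_image, mem_Iic]
  constructor
  · rintro ⟨⟨m, rfl⟩, hm⟩
    exact ⟨m, he.le_iff_ge.1 hm, rfl⟩
  · rintro ⟨m, hm, rfl⟩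
    exact ⟨⟨m, rfl⟩, he.antitone hm⟩

lemma StrictAnti.le_sub_nat {e : ℕ → ℤ} (he : StrictAnti e) (n : ℕ) : e n ≤ e 0 - n := by
  induction n with
  | zero => simp
  | succ n ih =>
    have := he (Nat.lt_add_one n)
    push_cast
    omega

section Maya

variable {f g : ℕ → ℕ}

lemma maya_eq_range (f : ℕ → ℕ) : maya f = range fun n => (f n : ℤ) - n - 1 := by
  ext m
  simp only [maya, mem_ofPred_eq, mem_range, eq_comm]

lemma strictAnti_maya_seq (hf : Antitone f) : StrictAnti fun n => (f n : ℤ) - n - 1 :=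
  strictAnti_nat_of_succ_lt fun n => by
    have := hf (Nat.le_add_right n 1)
    push_cast
    omega

lemma eq_of_maya_eq (hf : Antitone f) (hg : Antitone g) (h : maya f = maya g) : f = g := by
  have hseq := ((strictAnti_maya_seq hf).dual_right.range_inj
    (strictAnti_maya_seq hg).dual_right).1 (by rw [range_comp, range_comp, ← maya_eq_range,
      ← maya_eq_range, h])
  funext n
  have := congrFun hseq n
  simp only [Function.comp_apply, OrderDual.toDual_inj] at this
  omega

end Maya

lemma bddAbove_of_finite_Spos {T : Set ℤ} (hp : (Spos T).Finite) : BddAbove T :=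
  (hp.bddAbove.union bddAbove_Iio).mono fun t ht => (le_or_gt 0 t).imp (⟨ht, ·⟩) id

lemma exists_Iio_subset_of_finite_Sneg {T : Set ℤ} (hn : (Sneg T).Finite) : ∃ b, Iio b ⊆ T := by
  obtain ⟨b, hb⟩ := hn.bddBelow
  refine ⟨min b 0, fun m hm => by_contra fun hmT => ?_⟩
  have := hb ⟨hmT, lt_of_lt_of_le hm (min_le_right b 0)⟩
  have := min_le_left b 0
  simp only [mem_Iio] at hm
  omega

lemma exists_maya_eq_of_charge_eq_zero {T : Set ℤ} (hp : (Spos T).Finite) (hn : (Sneg T).Finite)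
    (h0 : charge T = 0) : ∃ f, IsPartitionFun f ∧ maya f = T := by
  obtain ⟨b, hb⟩ := exists_Iio_subset_of_finite_Sneg hn
  have hT' : ¬ BddBelow T := fun ⟨a, ha⟩ => by
    have := ha (hb (show min a b - 1 < b by omega))
    omega
  obtain ⟨e, he, hrange⟩ := exists_strictAnti_range_eq (bddAbove_of_finite_Spos hp) hT'
  refine ⟨fun n => (Tᶜ ∩ Iio (e n)).ncard, ⟨fun m n hmn => ?_, ?_⟩, ?_⟩
  · exact ncard_le_ncard (inter_subset_inter_right _ (Iio_subset_Iio (he.antitone hmn)))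
      (finite_compl_inter_Iio hn _)
  · refine ⟨(e 0 - b).toNat, fun n hN => ?_⟩
    have := he.le_sub_nat n
    have hempty : Tᶜ ∩ Iio (e n) = ∅ := eq_empty_of_forall_notMem fun m ⟨hmT, hm⟩ =>
      hmT (hb (by simp only [mem_Iio] at hm ⊢; omega))
    simp only [hempty, ncard_empty]
  · have hcount : ∀ n, (T ∩ Ici (e n)).ncard = n + 1 := fun n => by
      rw [← hrange, he.range_inter_Ici, ncard_image_of_injective _ he.injective, ncard_Iic_nat]
    have hseq : (fun n => ((Tᶜ ∩ Iio (e n)).ncard : ℤ) - n - 1) = e := funext fun n => by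
      have := chargeAt_eq hp hn (e n)
      rw [chargeAt, hcount, h0] at this
      push_cast at this
      omega
    rw [maya_eq_range, hseq, hrange]

theorem shifted_set_is_maya_diagram (S : Set ℤ)
    (hp : (Spos S).Finite) (hm : (Sneg S).Finite) :
    ∃! f : ℕ → ℕ, IsPartitionFun f ∧ maya f = (fun s => s - charge S) '' S := by
  obtain ⟨f, hf, hfS⟩ := exists_maya_eq_of_charge_eq_zero (T := (· - charge S) '' S)
    (by rw [Spos_image_sub]; exact (finite_inter_Ici hp _).image _)
    (by rw [Sneg_image_sub]; exact (finite_compl_inter_Iio hm _).image _)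
    (by rw [charge_image_sub, chargeAt_eq hp hm, sub_self])
  exact ⟨f, ⟨hf, hfS⟩, fun g ⟨hg, hgS⟩ => eq_of_maya_eq hg.1 hf.1 (hgS.trans hfS.symm)⟩
end

section
/- For every partition λ, the size of λ^{rc} is strictly less than the size of λ when λ is nonempty; more precisely |λ^{rc}| = |λ| − (min S⁺ − max S⁻) ≤ |λ| − 1, where S is the Maya diagram of λ. -/
/-- The size (number of boxes) of the partition encoded by `f`. -/
noncomputable def psize (f : ℕ → ℕ) : ℕ := ∑' n, f n

open Finset

lemma spos_finite (f : ℕ → ℕ) (hf : Antitone f) : (Spos (maya f)).Finite := by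
  apply (Set.finite_Icc (0:ℤ) (f 0)).subset
  rintro x ⟨⟨n, rfl⟩, hx⟩
  have := hf (Nat.zero_le n)
  exact ⟨hx, by omega⟩

lemma sneg_finite (f : ℕ → ℕ) (N : ℕ) (hN : ∀ n, N ≤ n → f n = 0) :
    (Sneg (maya f)).Finite := by
  apply (Set.finite_Icc (-(N:ℤ)) 0).subset
  rintro x ⟨hx, hx0⟩
  refine ⟨?_, by omega⟩
  by_contra h
  push_neg at h
  apply hx
  refine ⟨(-x-1).toNat, ?_⟩
  have h1 : ((-x-1).toNat : ℤ) = -x-1 := Int.toNat_of_nonneg (by omega)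
  have h2 : N ≤ (-x-1).toNat := by omega
  rw [hN _ h2]
  omega

lemma psize_spec (f : ℕ → ℕ) (hf : IsPartitionFun f) (A B : Finset ℤ)
    (hA : ↑A = Spos (maya f)) (hB : ↑B = Sneg (maya f)) :
    (psize f : ℤ) = ∑ x ∈ A, x - ∑ x ∈ B, x := by
  classical
  obtain ⟨hanti, N, hN⟩ := hf
  have hps : (psize f : ℤ) = ∑ n ∈ range N, (f n : ℤ) := by
    unfold psize
    rw [tsum_eq_sum (s := range N) (fun n hn => hN n (by simpa using hn))]
    push_cast
    ring
  set e : ℕ → ℤ := fun n => (f n : ℤ) - n - 1 with he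
  have hsa : StrictAnti e := by
    intro a b h
    have h1 : f b ≤ f a := hanti h.le
    simp only [he]
    omega
  have hmemA : ∀ x, x ∈ A ↔ x ∈ maya f ∧ 0 ≤ x := by
    intro x; rw [← Finset.mem_coe, hA]; rfl
  have hmemB : ∀ x, x ∈ B ↔ x ∉ maya f ∧ x < 0 := by
    intro x; rw [← Finset.mem_coe, hB]; rfl
  have hwit : ∀ x ∈ maya f, -(N:ℤ) ≤ x → ∃ n < N, e n = x := by
    rintro x ⟨n, rfl⟩ hx
    refine ⟨n, ?_, rfl⟩
    by_contra h
    push_neg at h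
    have := hN n h
    omega
  set T : Finset ℤ := (range N).image e with hT
  set U : Finset ℤ := Finset.Ico (-(N:ℤ)) 0 with hU
  set C : Finset ℤ := U.filter (· ∈ maya f) with hC
  have hTAC : T = A ∪ C := by
    ext x
    simp only [hT, hC, hU, mem_image, mem_union, mem_filter, mem_range,
      Finset.mem_Ico, hmemA]
    constructor
    · rintro ⟨n, hn, rfl⟩
      rcases le_or_gt 0 (e n) with h0 | h0
      · exact Or.inl ⟨⟨n, rfl⟩, h0⟩
      · refine Or.inr ⟨⟨?_, h0⟩, ⟨n, rfl⟩⟩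
        simp only [he]
        omega
    · rintro (⟨hx, h0⟩ | ⟨⟨h1, h2⟩, hx⟩)
      · obtain ⟨n, hn, rfl⟩ := hwit x hx (by omega)
        exact ⟨n, hn, rfl⟩
      · obtain ⟨n, hn, rfl⟩ := hwit x hx h1
        exact ⟨n, hn, rfl⟩
  have hdisj : Disjoint A C := by
    rw [Finset.disjoint_left]
    intro x hxA hxC
    obtain ⟨-, h0⟩ := (hmemA x).mp hxA
    simp only [hC, hU, mem_filter, Finset.mem_Ico] at hxC
    omega
  have hBU : B = U.filter (fun x => x ∉ maya f) := by
    ext x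
    simp only [hmemB, hU, mem_filter, Finset.mem_Ico]
    constructor
    · rintro ⟨hx, h0⟩
      refine ⟨⟨?_, h0⟩, hx⟩
      by_contra h
      push_neg at h
      apply hx
      refine ⟨(-x-1).toNat, ?_⟩
      have h1 : ((-x-1).toNat : ℤ) = -x-1 := Int.toNat_of_nonneg (by omega)
      have h2 : N ≤ (-x-1).toNat := by omega
      rw [hN _ h2]
      omega
    · rintro ⟨⟨_, h0⟩, hx⟩
      exact ⟨hx, h0⟩
  have hsum1 : ∑ x ∈ T, x = ∑ n ∈ range N, e n :=
    Finset.sum_image (fun a _ b _ h => hsa.injective h)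
  have hsum2 : ∑ x ∈ T, x = ∑ x ∈ A, x + ∑ x ∈ C, x := by
    rw [hTAC, Finset.sum_union hdisj]
  have hsum3 : ∑ x ∈ C, x + ∑ x ∈ B, x = ∑ x ∈ U, x := by
    rw [hBU, hC]
    exact Finset.sum_filter_add_sum_filter_not U _ _
  have hUeq : U = (range N).image (fun n : ℕ => -(n:ℤ) - 1) := by
    ext x
    simp only [hU, Finset.mem_Ico, mem_image, mem_range]
    constructor
    · rintro ⟨h1, h2⟩
      refine ⟨(-x-1).toNat, by omega, ?_⟩
      show -(((-x-1).toNat : ℕ) : ℤ) - 1 = x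
      omega
    · rintro ⟨n, hn, rfl⟩
      show -(N:ℤ) ≤ -(n:ℤ) - 1 ∧ -(n:ℤ) - 1 < 0
      omega
  have hsum4 : ∑ x ∈ U, x = ∑ n ∈ range N, (-(n:ℤ) - 1) := by
    rw [hUeq]
    refine Finset.sum_image (fun a _ b _ h => ?_)
    have h' : -(a:ℤ) - 1 = -(b:ℤ) - 1 := h
    omega
  have hsplit : ∑ n ∈ range N, (f n : ℤ) = (∑ n ∈ range N, e n) + ∑ n ∈ range N, ((n:ℤ) + 1) := by
    rw [← Finset.sum_add_distrib]
    apply Finset.sum_congr rfl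
    intro n _
    simp only [he]
    ring
  have h5 : ∑ n ∈ range N, (-(n:ℤ) - 1) = - ∑ n ∈ range N, ((n:ℤ) + 1) := by
    rw [← Finset.sum_neg_distrib]
    apply Finset.sum_congr rfl
    intros
    ring
  rw [hps, hsplit]
  linarith [hsum1, hsum2, hsum3, hsum4, h5]

theorem size_rc_lt_size
    (f g : ℕ → ℕ) (hf : IsPartitionFun f) (hg : IsPartitionFun g)
    (hne : f 0 ≠ 0)  -- λ is nonempty
    (m M : ℤ)
    (hm : IsLeast (Spos (maya f)) m) (hM : IsGreatest (Sneg (maya f)) M)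
    -- g = λ^{rc}, the partition with Maya diagram (S \ {min S⁺}) ∪ {max S⁻}
    (hgmaya : maya g = (maya f \ {m}) ∪ {M}) :
    (psize g : ℤ) = (psize f : ℤ) - (m - M) ∧ (psize g : ℤ) ≤ (psize f : ℤ) - 1 := by

  classical
  obtain ⟨N, hN⟩ := hf.2
  have hfinA := spos_finite f hf.1
  have hfinB := sneg_finite f N hN
  set A := hfinA.toFinset with hAdef
  set B := hfinB.toFinset with hBdef
  have hA : (A : Set ℤ) = Spos (maya f) := hfinA.coe_toFinset
  have hB : (B : Set ℤ) = Sneg (maya f) := hfinB.coe_toFinset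
  have h0m : 0 ≤ m := hm.1.2
  have hM0 : M < 0 := hM.1.2
  have hSposg : Spos (maya g) = Spos (maya f) \ {m} := by
    ext x
    simp only [Spos, Set.mem_setOf_eq, hgmaya, Set.mem_union, Set.mem_diff,
      Set.mem_singleton_iff]
    constructor
    · rintro ⟨(⟨h1, h2⟩ | rfl), h3⟩
      · exact ⟨⟨h1, h3⟩, h2⟩
      · omega
    · rintro ⟨⟨h1, h3⟩, h2⟩
      exact ⟨Or.inl ⟨h1, h2⟩, h3⟩
  have hSnegg : Sneg (maya g) = Sneg (maya f) \ {M} := by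
    ext x
    simp only [Sneg, Set.mem_setOf_eq, hgmaya, Set.mem_union, Set.mem_diff,
      Set.mem_singleton_iff]
    constructor
    · rintro ⟨h1, h2⟩
      have hxm : x ≠ m := by omega
      exact ⟨⟨fun hx => h1 (Or.inl ⟨hx, hxm⟩), h2⟩, fun hx => h1 (Or.inr hx)⟩
    · rintro ⟨⟨h1, h2⟩, h3⟩
      refine ⟨?_, h2⟩
      rintro (⟨hx, -⟩ | rfl)
      · exact h1 hx
      · exact h3 rfl
  have hmA : m ∈ A := by
    rw [← Finset.mem_coe, hA]
    exact hm.1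
  have hMB : M ∈ B := by
    rw [← Finset.mem_coe, hB]
    exact hM.1
  have hAe : ((A.erase m : Finset ℤ) : Set ℤ) = Spos (maya g) := by
    rw [Finset.coe_erase, hA, hSposg]
  have hBe : ((B.erase M : Finset ℤ) : Set ℤ) = Sneg (maya g) := by
    rw [Finset.coe_erase, hB, hSnegg]
  have e1 := psize_spec f ⟨hf.1, N, hN⟩ A B hA hB
  have e2 := psize_spec g hg _ _ hAe hBe
  rw [Finset.sum_erase_eq_sub hmA, Finset.sum_erase_eq_sub hMB] at e2
  constructor <;> omega
end

section
/- A subset π ⊆ ℕ³ containing I⁺ ∪ II ∪ III, downward closed in the product order on ℕ³, with π \ (I⁺ ∪ II ∪ III) finite, is sent by the weight w(π) = |π \ (I⁺ ∪ II ∪ III)| − |II| − 2|III| to a well-defined integer, and w(π) ≥ −|II| − 2|III| for all such π, with the generating function V(μ₁,μ₂,μ₃) = Σ_π q^{w(π)} a well-defined Laurent series in q (each coefficient counting finitely many π). -/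
def MemYoung (f : ℕ → ℕ) (u v : ℤ) : Prop :=
  ∃ a b : ℕ, b < f a ∧ u = (a : ℤ) ∧ v = (b : ℤ)

def Cyl1 (f : ℕ → ℕ) : Set (ℤ × ℤ × ℤ) := {p | MemYoung f p.2.1 p.2.2}
def Cyl2 (f : ℕ → ℕ) : Set (ℤ × ℤ × ℤ) := {p | MemYoung f p.2.2 p.1}
def Cyl3 (f : ℕ → ℕ) : Set (ℤ × ℤ × ℤ) := {p | MemYoung f p.1 p.2.1}

/-- The closed positive octant ℤ³_{≥0}. -/
def Oct : Set (ℤ × ℤ × ℤ) := {p | 0 ≤ p.1 ∧ 0 ≤ p.2.1 ∧ 0 ≤ p.2.2}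

variable (f₁ f₂ f₃ : ℕ → ℕ)

/-- I⁺ = Cyl₁⁺ ∪ Cyl₂⁺ ∪ Cyl₃⁺. -/
def Iplus : Set (ℤ × ℤ × ℤ) := (Cyl1 f₁ ∪ Cyl2 f₂ ∪ Cyl3 f₃) ∩ Oct

/-- II = II_{1̄} ∪ II_{2̄} ∪ II_{3̄}. -/
def IIset : Set (ℤ × ℤ × ℤ) :=
  ((Cyl2 f₂ ∩ Cyl3 f₃) \ Cyl1 f₁) ∪ ((Cyl3 f₃ ∩ Cyl1 f₁) \ Cyl2 f₂) ∪
    ((Cyl1 f₁ ∩ Cyl2 f₂) \ Cyl3 f₃)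

/-- III = Cyl₁ ∩ Cyl₂ ∩ Cyl₃. -/
def IIIset : Set (ℤ × ℤ × ℤ) := Cyl1 f₁ ∩ Cyl2 f₂ ∩ Cyl3 f₃

/-- Plane partition asymptotic to (μ₁,μ₂,μ₃): a subset of the octant which is
downward closed in the product order (an order ideal of ℤ³_{≥0}), contains
I⁺ ∪ II ∪ III, and has only finitely many other points. -/
def AsymPP (π : Set (ℤ × ℤ × ℤ)) : Prop :=
  π ⊆ Oct ∧
  (∀ p ∈ π, ∀ q ∈ Oct, q ≤ p → q ∈ π) ∧
  Iplus f₁ f₂ f₃ ∪ IIset f₁ f₂ f₃ ∪ IIIset f₁ f₂ f₃ ⊆ π ∧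
  (π \ (Iplus f₁ f₂ f₃ ∪ IIset f₁ f₂ f₃ ∪ IIIset f₁ f₂ f₃)).Finite

/-- The weight w(π). -/
noncomputable def wDT (π : Set (ℤ × ℤ × ℤ)) : ℤ :=
  ((π \ (Iplus f₁ f₂ f₃ ∪ IIset f₁ f₂ f₃ ∪ IIIset f₁ f₂ f₃)).ncard : ℤ) -
    ((IIset f₁ f₂ f₃).ncard : ℤ) - 2 * ((IIIset f₁ f₂ f₃).ncard : ℤ)

lemma memYoung_lt {f : ℕ → ℕ} (hmono : Antitone f) {N : ℕ} (hN : ∀ n, N ≤ n → f n = 0)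
    {u v : ℤ} (h : MemYoung f u v) : 0 ≤ u ∧ u < (N : ℤ) ∧ 0 ≤ v ∧ v < (f 0 : ℤ) := by
  obtain ⟨a, b, hb, rfl, rfl⟩ := h
  have ha : a < N := by
    by_contra hc
    have := hN a (le_of_not_gt hc)
    omega
  have hb0 : b < f 0 := lt_of_lt_of_le hb (hmono (Nat.zero_le a))
  exact ⟨Int.ofNat_nonneg a, by exact_mod_cast ha, Int.ofNat_nonneg b, by exact_mod_cast hb0⟩

lemma line_card {D : Set (ℤ × ℤ × ℤ)} (hD : D.Finite) (g : ℤ → ℤ × ℤ × ℤ)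
    (hg : Function.Injective g) {C x : ℤ}
    (h : ∀ t, C ≤ t → t ≤ x → g t ∈ D) : x < C + D.ncard := by
  by_contra hc
  push_neg at hc
  have hsub : g '' Set.Icc C x ⊆ D := by rintro _ ⟨t, ht, rfl⟩; exact h t ht.1 ht.2
  have h1 : (g '' Set.Icc C x).ncard ≤ D.ncard := Set.ncard_le_ncard hsub hD
  rw [Set.ncard_image_of_injective _ hg] at h1
  have h2 : (Set.Icc C x).ncard = (x + 1 - C).toNat := by
    rw [← Finset.coe_Icc, Set.ncard_coe_finset, Int.card_Icc]
  omega

theorem DT_vertex_well_defined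
    (h₁ : IsPartitionFun f₁) (h₂ : IsPartitionFun f₂) (h₃ : IsPartitionFun f₃) :
    (IIset f₁ f₂ f₃).Finite ∧ (IIIset f₁ f₂ f₃).Finite ∧
    (∀ π, AsymPP f₁ f₂ f₃ π →
        -((IIset f₁ f₂ f₃).ncard : ℤ) - 2 * ((IIIset f₁ f₂ f₃).ncard : ℤ) ≤
          wDT f₁ f₂ f₃ π) ∧
    (∀ k : ℤ, {π | AsymPP f₁ f₂ f₃ π ∧ wDT f₁ f₂ f₃ π = k}.Finite) := by
  obtain ⟨m₁, N₁, hN₁⟩ := h₁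
  obtain ⟨m₂, N₂, hN₂⟩ := h₂
  obtain ⟨m₃, N₃, hN₃⟩ := h₃
  set C : ℕ := N₁ + N₂ + N₃ + f₁ 0 + f₂ 0 + f₃ 0 with hC
  -- every pairwise intersection of cylinders lies in the box [0,C]³
  have hpair : ∀ p : ℤ × ℤ × ℤ,
      (p ∈ Cyl1 f₁ ∧ p ∈ Cyl2 f₂) ∨ (p ∈ Cyl2 f₂ ∧ p ∈ Cyl3 f₃) ∨
        (p ∈ Cyl3 f₃ ∧ p ∈ Cyl1 f₁) →
      p ∈ Set.Icc ((0:ℤ), (0:ℤ), (0:ℤ)) ((C:ℤ), (C:ℤ), (C:ℤ)) := by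
    rintro p (⟨ha, hb⟩ | ⟨ha, hb⟩ | ⟨ha, hb⟩) <;>
      simp only [Set.mem_Icc, Prod.le_def]
    · obtain ⟨h1, h2, h3, h4⟩ := memYoung_lt m₁ hN₁ ha
      obtain ⟨h5, h6, h7, h8⟩ := memYoung_lt m₂ hN₂ hb
      omega
    · obtain ⟨h1, h2, h3, h4⟩ := memYoung_lt m₂ hN₂ ha
      obtain ⟨h5, h6, h7, h8⟩ := memYoung_lt m₃ hN₃ hb
      omega
    · obtain ⟨h1, h2, h3, h4⟩ := memYoung_lt m₃ hN₃ ha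
      obtain ⟨h5, h6, h7, h8⟩ := memYoung_lt m₁ hN₁ hb
      omega
  have hboxfin : (Set.Icc ((0:ℤ), (0:ℤ), (0:ℤ)) ((C:ℤ), (C:ℤ), (C:ℤ))).Finite :=
    Set.finite_Icc _ _
  have hIIfin : (IIset f₁ f₂ f₃).Finite := by
    refine hboxfin.subset ?_
    rintro p ((⟨⟨ha, hb⟩, -⟩ | ⟨⟨ha, hb⟩, -⟩) | ⟨⟨ha, hb⟩, -⟩)
    · exact hpair p (Or.inr (Or.inl ⟨ha, hb⟩))
    · exact hpair p (Or.inr (Or.inr ⟨ha, hb⟩))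
    · exact hpair p (Or.inl ⟨ha, hb⟩)
  have hIIIfin : (IIIset f₁ f₂ f₃).Finite := by
    refine hboxfin.subset ?_
    rintro p ⟨⟨ha, hb⟩, -⟩
    exact hpair p (Or.inl ⟨ha, hb⟩)
  refine ⟨hIIfin, hIIIfin, ?_, ?_⟩
  · intro π hπ
    have h0 : (0 : ℤ) ≤
        ((π \ (Iplus f₁ f₂ f₃ ∪ IIset f₁ f₂ f₃ ∪ IIIset f₁ f₂ f₃)).ncard : ℤ) :=
      Int.ofNat_nonneg _
    unfold wDT
    linarith
  · intro k
    set S := Iplus f₁ f₂ f₃ ∪ IIset f₁ f₂ f₃ ∪ IIIset f₁ f₂ f₃ with hS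
    set n : ℕ := (k + ((IIset f₁ f₂ f₃).ncard : ℤ) + 2 * ((IIIset f₁ f₂ f₃).ncard : ℤ)).toNat
      with hn
    have hScyl : ∀ q : ℤ × ℤ × ℤ, q ∉ Cyl1 f₁ → q ∉ Cyl2 f₂ → q ∉ Cyl3 f₃ → q ∉ S := by
      intro q hq1 hq2 hq3 hq
      rcases hq with (hq | hq) | hq
      · rcases hq.1 with (h | h) | h
        exacts [hq1 h, hq2 h, hq3 h]
      · rcases hq with (⟨⟨h, -⟩, -⟩ | ⟨⟨h, -⟩, -⟩) | ⟨⟨h, -⟩, -⟩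
        exacts [hq2 h, hq3 h, hq1 h]
      · exact hq1 hq.1.1
    have key : ∀ π, AsymPP f₁ f₂ f₃ π → wDT f₁ f₂ f₃ π = k →
        π \ S ⊆ Set.Icc ((0:ℤ), (0:ℤ), (0:ℤ)) ((C:ℤ) + n, (C:ℤ) + n, (C:ℤ) + n) := by
      rintro π ⟨hsubO, hdc, hScont, hfin⟩ hw
      have hcard :
          (π \ (Iplus f₁ f₂ f₃ ∪ IIset f₁ f₂ f₃ ∪ IIIset f₁ f₂ f₃)).ncard = n := by
        unfold wDT at hw
        omega
      intro p hp
      obtain ⟨hpπ, hpS⟩ := hp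
      obtain ⟨hx0, hy0, hz0⟩ := hsubO hpπ
      have hp1 : p ∉ Cyl1 f₁ := fun h => hpS (Or.inl (Or.inl ⟨Or.inl (Or.inl h), hx0, hy0, hz0⟩))
      have hp2 : p ∉ Cyl2 f₂ := fun h => hpS (Or.inl (Or.inl ⟨Or.inl (Or.inr h), hx0, hy0, hz0⟩))
      have hp3 : p ∉ Cyl3 f₃ := fun h => hpS (Or.inl (Or.inl ⟨Or.inr h, hx0, hy0, hz0⟩))
      have hCcast : ∀ m : ℕ, m ≤ C → (m : ℤ) ≤ (C : ℤ) := fun m hm => Int.ofNat_le.mpr hm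
      -- x-coordinate bound
      have hx : p.1 < (C : ℤ) + n := by
        have := line_card hfin (fun t => (t, p.2.1, p.2.2))
          (fun a b h => by simpa using h) (C := (C : ℤ)) (x := p.1) ?_
        · omega
        intro t ht1 ht2
        show (t, p.2.1, p.2.2) ∈ π \ (Iplus f₁ f₂ f₃ ∪ IIset f₁ f₂ f₃ ∪ IIIset f₁ f₂ f₃)
        refine ⟨hdc p hpπ (t, p.2.1, p.2.2) ⟨(Int.ofNat_nonneg C).trans ht1, hy0, hz0⟩
          ⟨ht2, le_refl _, le_refl _⟩, ?_⟩
        refine hScyl _ (fun h => hp1 h) (fun h => ?_) (fun h => ?_)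
        · have h4 : t < (f₂ 0 : ℤ) := (memYoung_lt m₂ hN₂ h).2.2.2
          have := hCcast (f₂ 0) (by omega); omega
        · have h2 : t < (N₃ : ℤ) := (memYoung_lt m₃ hN₃ h).2.1
          have := hCcast N₃ (by omega); omega
      -- y-coordinate bound
      have hy : p.2.1 < (C : ℤ) + n := by
        have := line_card hfin (fun t => (p.1, t, p.2.2))
          (fun a b h => by simpa using h) (C := (C : ℤ)) (x := p.2.1) ?_
        · omega
        intro t ht1 ht2
        show (p.1, t, p.2.2) ∈ π \ (Iplus f₁ f₂ f₃ ∪ IIset f₁ f₂ f₃ ∪ IIIset f₁ f₂ f₃)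
        refine ⟨hdc p hpπ (p.1, t, p.2.2) ⟨hx0, (Int.ofNat_nonneg C).trans ht1, hz0⟩
          ⟨le_refl _, ht2, le_refl _⟩, ?_⟩
        refine hScyl _ (fun h => ?_) (fun h => hp2 h) (fun h => ?_)
        · have h2 : t < (N₁ : ℤ) := (memYoung_lt m₁ hN₁ h).2.1
          have := hCcast N₁ (by omega); omega
        · have h4 : t < (f₃ 0 : ℤ) := (memYoung_lt m₃ hN₃ h).2.2.2
          have := hCcast (f₃ 0) (by omega); omega
      -- z-coordinate bound
      have hz : p.2.2 < (C : ℤ) + n := by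
        have := line_card hfin (fun t => (p.1, p.2.1, t))
          (fun a b h => by simpa using h) (C := (C : ℤ)) (x := p.2.2) ?_
        · omega
        intro t ht1 ht2
        show (p.1, p.2.1, t) ∈ π \ (Iplus f₁ f₂ f₃ ∪ IIset f₁ f₂ f₃ ∪ IIIset f₁ f₂ f₃)
        refine ⟨hdc p hpπ (p.1, p.2.1, t) ⟨hx0, hy0, (Int.ofNat_nonneg C).trans ht1⟩
          ⟨le_refl _, le_refl _, ht2⟩, ?_⟩
        refine hScyl _ (fun h => ?_) (fun h => ?_) (fun h => hp3 h)
        · have h4 : t < (f₁ 0 : ℤ) := (memYoung_lt m₁ hN₁ h).2.2.2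
          have := hCcast (f₁ 0) (by omega); omega
        · have h2 : t < (N₂ : ℤ) := (memYoung_lt m₂ hN₂ h).2.1
          have := hCcast N₂ (by omega); omega
      simp only [Set.mem_Icc, Prod.le_def]
      exact ⟨⟨hx0, hy0, hz0⟩, by omega, by omega, by omega⟩
    have hbigfin : (Set.Icc ((0:ℤ), (0:ℤ), (0:ℤ))
        ((C:ℤ) + n, (C:ℤ) + n, (C:ℤ) + n)).Finite := Set.finite_Icc _ _
    apply Set.Finite.of_finite_image (f := fun π => π \ S)
    · apply Set.Finite.subset hbigfin.finite_subsets
      rintro _ ⟨π, hπ, rfl⟩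
      exact key π hπ.1 hπ.2
    · intro π₁ h1 π₂ h2 he
      have hS1 : S ⊆ π₁ := h1.1.2.2.1
      have hS2 : S ⊆ π₂ := h2.1.2.2.1
      have he' : π₁ \ S = π₂ \ S := he
      calc π₁ = π₁ \ S ∪ S := (Set.diff_union_of_subset hS1).symm
        _ = π₂ \ S ∪ S := by rw [he']
        _ = π₂ := Set.diff_union_of_subset hS2
end

section
/- Desnanot–Jacobi (Dodgson condensation) identity: for an n×n matrix M over a commutative ring (n ≥ 2), det(M)·det(M with first and last rows and first and last columns removed) = det(M with first row and first column removed)·det(M with last row and last column removed) − det(M with first row and last column removed)·det(M with last row and first column removed). -/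
/-!
Let `B` be the identity matrix with its first and last columns replaced by the corresponding
columns of `adj M`. Since `M * adj M = det M • 1`, the product `M * B` is `M` with its first and
last columns replaced by `det M • e₁` and `det M • eₙ`, so
`det M * det B = (det M)² * det M^{1,n}_{1,n}`. On the other hand `det B` is the `2 × 2` minor of
`adj M` on rows and columns `1, n`, whose entries are the four signed minors of the right-hand
side. Cancelling one factor `det M` is legitimate for the generic matrix over
`ℤ[x_{ij}]`, whose determinant is a nonzero element of a domain; specializing the variables
gives the identity over any commutative ring.
-/

open Matrix

namespace Matrix

variable {R : Type*} [CommRing R]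

section Jacobi

variable {n : Type*} [Fintype n] [DecidableEq n]

theorem det_one_updateCol_updateCol {i j : n} (hij : i ≠ j) (u v : n → R) :
    (((1 : Matrix n n R).updateCol i u).updateCol j v).det = u i * v j - u j * v i := by
  set e : n → n → R := fun k => Pi.single k 1
  -- a rank-two perturbation of `1`, so the determinant reduces to a `2 × 2` one
  have hB : ((1 : Matrix n n R).updateCol i u).updateCol j v =
      1 + (of ![u - e i, v - e j])ᵀ * of ![e i, e j] := by
    ext k l
    simp [e, updateCol_apply, mul_apply, Fin.sum_univ_two, Pi.single_apply, one_apply]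
    split_ifs <;> simp_all
  rw [hB, det_one_add_mul_comm, det_fin_two]
  simp [e, hij, hij.symm]
  ring

theorem mulVec_col_adjugate (A : Matrix n n R) (i : n) :
    A *ᵥ A.adjugate.col i = A.det • Pi.single i 1 := by
  rw [← mulVec_single_one, mulVec_mulVec, mul_adjugate, smul_mulVec, one_mulVec]

theorem det_updateCol_smul_updateCol_smul (A : Matrix n n R) {i j : n} (hij : i ≠ j)
    (s t : R) (u v : n → R) :
    ((A.updateCol i (s • u)).updateCol j (t • v)).det =
      s * t * ((A.updateCol i u).updateCol j v).det := by
  rw [det_updateCol_smul, updateCol_comm _ hij, det_updateCol_smul, updateCol_comm _ hij.symm]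
  ring

theorem det_mul_det_updateCol_single_updateCol_single_of_isLeftRegular (A : Matrix n n R)
    (hA : IsLeftRegular A.det) {i j : n} (hij : i ≠ j) :
    A.det * ((A.updateCol i (Pi.single i 1)).updateCol j (Pi.single j 1)).det =
      A.adjugate i i * A.adjugate j j - A.adjugate j i * A.adjugate i j := by
  apply hA
  have hprod : A * ((1 : Matrix n n R).updateCol i (A.adjugate.col i)).updateCol j
      (A.adjugate.col j) =
        (A.updateCol i (A.det • Pi.single i 1)).updateCol j (A.det • Pi.single j 1) := by
    rw [mul_updateCol, mul_updateCol, Matrix.mul_one, mulVec_col_adjugate, mulVec_col_adjugate]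
  have hdet := congrArg det hprod
  rw [det_mul, det_one_updateCol_updateCol hij, det_updateCol_smul_updateCol_smul _ hij] at hdet
  simp only [col_apply] at hdet
  dsimp only
  linear_combination hdet.symm

theorem _root_.RingHom.map_det_updateCol_single_updateCol_single {S : Type*} [CommRing S]
    (f : R →+* S) (A : Matrix n n R) (i j : n) :
    f ((A.updateCol i (Pi.single i 1)).updateCol j (Pi.single j 1)).det =
      (((f.mapMatrix A).updateCol i (Pi.single i 1)).updateCol j (Pi.single j 1)).det := by
  rw [RingHom.map_det]
  congr 1
  ext k l
  simp only [RingHom.mapMatrix_apply, map_apply, updateCol_apply, Pi.single_apply]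
  split_ifs <;> simp

theorem det_mul_det_updateCol_single_updateCol_single (A : Matrix n n R) {i j : n}
    (hij : i ≠ j) :
    A.det * ((A.updateCol i (Pi.single i 1)).updateCol j (Pi.single j 1)).det =
      A.adjugate i i * A.adjugate j j - A.adjugate j i * A.adjugate i j := by
  have hX := det_mul_det_updateCol_single_updateCol_single_of_isLeftRegular
    (mvPolynomialX n n ℤ) (IsRegular.of_ne_zero (det_mvPolynomialX_ne_zero n ℤ)).left hij
  set f := (MvPolynomial.aeval (R := ℤ) fun p : n × n => A p.1 p.2).toRingHom
  have hfX : f.mapMatrix (mvPolynomialX n n ℤ) = A := mvPolynomialX_mapMatrix_aeval ℤ A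
  have hadj : ∀ k l, f ((mvPolynomialX n n ℤ).adjugate k l) = A.adjugate k l := fun k l => by
    rw [← hfX, ← RingHom.map_adjugate]
    rfl
  have := congrArg f hX
  rwa [map_mul, map_sub, map_mul, map_mul, RingHom.map_det,
    RingHom.map_det_updateCol_single_updateCol_single, hfX, hadj, hadj, hadj, hadj] at this

end Jacobi

theorem det_updateCol_single {k : ℕ} (A : Matrix (Fin (k + 1)) (Fin (k + 1)) R)
    (i j : Fin (k + 1)) :
    (A.updateCol j (Pi.single i 1)).det =
      (-1) ^ (i + j : ℕ) * (A.submatrix i.succAbove j.succAbove).det := by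
  rw [← det_transpose, ← updateRow_transpose, ← adjugate_apply,
    adjugate_fin_succ_eq_det_submatrix, ← det_transpose, transpose_submatrix,
    transpose_transpose, add_comm]

theorem det_updateCol_single_self {k : ℕ} (A : Matrix (Fin (k + 1)) (Fin (k + 1)) R)
    (i : Fin (k + 1)) :
    (A.updateCol i (Pi.single i 1)).det = (A.submatrix i.succAbove i.succAbove).det := by
  rw [det_updateCol_single, (Even.add_self _).neg_one_pow, one_mul]

theorem det_updateCol_single_zero_updateCol_single_last {m : ℕ}
    (A : Matrix (Fin (m + 2)) (Fin (m + 2)) R) :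
    ((A.updateCol 0 (Pi.single 0 1)).updateCol (Fin.last _) (Pi.single (Fin.last _) 1)).det =
      (A.submatrix (fun i : Fin m => i.succ.castSucc) (fun j : Fin m => j.succ.castSucc)).det := by
  have hcast : (A.updateCol 0 (Pi.single 0 1)).submatrix Fin.castSucc Fin.castSucc =
      (A.submatrix Fin.castSucc Fin.castSucc).updateCol 0 (Pi.single 0 1) := by
    ext k l
    simp [updateCol_apply, Pi.single_apply]
  rw [det_updateCol_single_self, Fin.succAbove_last, hcast, det_updateCol_single_self,
    submatrix_submatrix]
  rfl

end Matrix

theorem desnanot_jacobi {R : Type*} [CommRing R] (m : ℕ)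
    (M : Matrix (Fin (m + 2)) (Fin (m + 2)) R) :
    M.det *
        (M.submatrix (fun i : Fin m => i.succ.castSucc)
          (fun j : Fin m => j.succ.castSucc)).det =
      (M.submatrix Fin.succ Fin.succ).det *
          (M.submatrix Fin.castSucc Fin.castSucc).det -
        (M.submatrix Fin.succ Fin.castSucc).det *
          (M.submatrix Fin.castSucc Fin.succ).det := by
  have h := det_mul_det_updateCol_single_updateCol_single M (Fin.last_pos (n := m)).ne
  simp only [adjugate_fin_succ_eq_det_submatrix, det_updateCol_single_zero_updateCol_single_last,
    Fin.succAbove_zero, Fin.succAbove_last, Fin.val_zero, Fin.val_last] at h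
  have hsign : (-1 : R) ^ (m + 1) * (-1) ^ (m + 1) = 1 := by
    rw [← pow_add]
    exact (Even.add_self _).neg_one_pow
  linear_combination h + ((M.submatrix Fin.succ Fin.succ).det *
      (M.submatrix Fin.castSucc Fin.castSucc).det -
    (M.submatrix Fin.succ Fin.castSucc).det * (M.submatrix Fin.castSucc Fin.succ).det) * hsign
end

section
/- Given three circularly contiguous color classes R, G, B of 2n nodes on a circle, there exists exactly one planar (non-crossing) perfect pairing of the nodes in which no node is paired with a node of its own color, provided such a pairing exists; i.e., a tripartite planar pairing, when it exists, is unique. -/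
/-!
STATEMENT 13. Given 2n nodes on a circle partitioned into three circularly
contiguous color classes, there is at most one planar (non-crossing) perfect
pairing in which no node is paired with a node of its own color: a tripartite
planar pairing, when it exists, is unique.

Nodes are indexed by `Fin (2*n)` in cyclic order.  A pairing is a fixed-point
free involution σ.  Chords {a, σ a} and {b, σ b} (normalized a < σ a, b < σ b)
cross iff a < b < σ a < σ b; planarity is the absence of crossings (for points
on a circle listed in cyclic order this linear-order condition is the standard
characterization).
-/

/-- `s` is a circularly contiguous arc of `Fin N`. -/
def IsCircularArc {N : ℕ} (s : Set (Fin N)) : Prop :=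
  ∃ (a : ℕ) (l : ℕ), s = {x : Fin N | ∃ k < l, (x : ℕ) = (a + k) % N}

/-- σ is a fixed-point free involution. -/
def IsPairing {N : ℕ} (σ : Fin N → Fin N) : Prop :=
  Function.Involutive σ ∧ ∀ i, σ i ≠ i

/-- Non-crossing (planar) pairing. -/
def IsPlanarPairing {N : ℕ} (σ : Fin N → Fin N) : Prop :=
  ∀ a b : Fin N, a < σ a → b < σ b → a < b → b < σ a → σ a < σ b → False

namespace TPPU


lemma modAux1 (N x t : ℕ) (hx : x < N) : ((x + t) % N + (N - t % N)) % N = x := by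
  have h0 : 0 < N := lt_of_le_of_lt (Nat.zero_le x) hx
  rw [Nat.mod_add_mod]
  have h3 : x + t + (N - t % N) = (x + (t % N + (N - t % N))) + N * (t / N) := by
    have := (Nat.div_add_mod t N).symm
    omega
  rw [h3, Nat.add_mul_mod_self_left]
  have h2 : t % N ≤ N := le_of_lt (Nat.mod_lt _ h0)
  have h4 : x + (t % N + (N - t % N)) = x + N := by omega
  rw [h4, Nat.add_mod_right, Nat.mod_eq_of_lt hx]

lemma modAux2 (N y t : ℕ) (hy : y < N) : ((y + (N - t % N)) % N + t) % N = y := by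
  have h0 : 0 < N := lt_of_le_of_lt (Nat.zero_le y) hy
  rw [Nat.mod_add_mod]
  have h3 : y + (N - t % N) + t = (y + (N - t % N + t % N)) + N * (t / N) := by
    have := (Nat.div_add_mod t N).symm; omega
  rw [h3, Nat.add_mul_mod_self_left]
  have h2 : t % N ≤ N := le_of_lt (Nat.mod_lt _ h0)
  have h4 : y + (N - t % N + t % N) = y + N := by omega
  rw [h4, Nat.add_mod_right, Nat.mod_eq_of_lt hy]

def shiftF (N t : ℕ) (x : Fin N) : Fin N := ⟨((x : ℕ) + t) % N, Nat.mod_lt _ x.pos⟩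

lemma shiftF_val (N t : ℕ) (x : Fin N) : ((shiftF N t x : Fin N) : ℕ) = ((x : ℕ) + t) % N := rfl

lemma shiftF_comp (N s t : ℕ) (x : Fin N) : shiftF N t (shiftF N s x) = shiftF N (s + t) x := by
  apply Fin.ext
  rw [shiftF_val, shiftF_val, shiftF_val, Nat.mod_add_mod, Nat.add_assoc]

lemma shiftF_congr {N s t : ℕ} (h : s % N = t % N) (x : Fin N) : shiftF N s x = shiftF N t x := by
  apply Fin.ext
  rw [shiftF_val, shiftF_val, Nat.add_mod, h, ← Nat.add_mod]

lemma shiftF_inj (N c : ℕ) : Function.Injective (shiftF N c) := by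
  intro z1 z2 h
  have h1 := modAux1 N z1 c z1.isLt
  have h2 := modAux1 N z2 c z2.isLt
  have hv : (((z1 : ℕ) + c) % N) = (((z2 : ℕ) + c) % N) := congrArg Fin.val h
  apply Fin.ext
  rw [← h1, ← h2, hv]

lemma shiftF_cancel1 (N t : ℕ) (x : Fin N) : shiftF N (N - t % N) (shiftF N t x) = x :=
  Fin.ext (modAux1 N x t x.isLt)

lemma shiftF_cancel2 (N t : ℕ) (y : Fin N) : shiftF N t (shiftF N (N - t % N) y) = y :=
  Fin.ext (modAux2 N y t y.isLt)

def conj1 {N : ℕ} (σ : Fin N → Fin N) : Fin N → Fin N :=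
  fun x => shiftF N (N - 1) (σ (shiftF N 1 x))

lemma s1_sp {N : ℕ} (hN : 2 ≤ N) (y : Fin N) : shiftF N 1 (shiftF N (N - 1) y) = y := by
  have : N - 1 = N - 1 % N := by rw [Nat.mod_eq_of_lt (by omega)]
  rw [this]
  exact shiftF_cancel2 N 1 y

lemma sp_s1 {N : ℕ} (hN : 2 ≤ N) (x : Fin N) : shiftF N (N - 1) (shiftF N 1 x) = x := by
  have : N - 1 = N - 1 % N := by rw [Nat.mod_eq_of_lt (by omega)]
  rw [this]
  exact shiftF_cancel1 N 1 x

lemma conj1_key {N : ℕ} (hN : 2 ≤ N) (σ : Fin N → Fin N) (x : Fin N) :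
    σ (shiftF N 1 x) = shiftF N 1 (conj1 σ x) := by
  rw [conj1, s1_sp hN]

lemma conj1_pairing {N : ℕ} (hN : 2 ≤ N) {σ : Fin N → Fin N} (h : IsPairing σ) :
    IsPairing (conj1 σ) := by
  constructor
  · intro x
    show shiftF N (N-1) (σ (shiftF N 1 (conj1 σ x))) = x
    rw [← conj1_key hN, h.1, sp_s1 hN]
  · intro x hx
    have h1 := congrArg (shiftF N 1) hx
    rw [← conj1_key hN σ x] at h1
    exact h.2 (shiftF N 1 x) h1

lemma conj1_planar {N : ℕ} (hN : 2 ≤ N) {σ : Fin N → Fin N} (h : IsPairing σ)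
    (hp : IsPlanarPairing σ) : IsPlanarPairing (conj1 σ) := by
  intro a b h1 h2 h3 h4 h5
  set TA := conj1 σ a with hTA
  set TB := conj1 σ b with hTB
  have vA : (a : ℕ) < (TA : ℕ) := h1
  have vB : (b : ℕ) < (TB : ℕ) := h2
  have vAB : (a : ℕ) < (b : ℕ) := h3
  have vBTA : (b : ℕ) < (TA : ℕ) := h4
  have vTATB : (TA : ℕ) < (TB : ℕ) := h5
  have hTBlt : (TB : ℕ) < N := TB.isLt
  have sv : ∀ x : Fin N, (x : ℕ) + 1 < N → ((shiftF N 1 x : Fin N) : ℕ) = (x : ℕ) + 1 := by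
    intro x hx
    rw [shiftF_val, Nat.mod_eq_of_lt hx]
  have svA : ((shiftF N 1 a : Fin N) : ℕ) = (a : ℕ) + 1 := sv a (by omega)
  have svB : ((shiftF N 1 b : Fin N) : ℕ) = (b : ℕ) + 1 := sv b (by omega)
  have svTA : ((shiftF N 1 TA : Fin N) : ℕ) = (TA : ℕ) + 1 := sv TA (by omega)
  have eA : σ (shiftF N 1 a) = shiftF N 1 TA := conj1_key hN σ a
  have eB : σ (shiftF N 1 b) = shiftF N 1 TB := conj1_key hN σ b
  by_cases hw : (TB : ℕ) + 1 < N
  · have svTB : ((shiftF N 1 TB : Fin N) : ℕ) = (TB : ℕ) + 1 := sv TB hw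
    exact hp (shiftF N 1 a) (shiftF N 1 b)
      (by rw [eA, Fin.lt_def, svA, svTA]; omega)
      (by rw [eB, Fin.lt_def, svB, svTB]; omega)
      (by rw [Fin.lt_def, svA, svB]; omega)
      (by rw [eA, Fin.lt_def, svB, svTA]; omega)
      (by rw [eA, eB, Fin.lt_def, svTA, svTB]; omega)
  · -- wrap: TB = N - 1
    have hTBv : (TB : ℕ) = N - 1 := by omega
    have svTB : ((shiftF N 1 TB : Fin N) : ℕ) = 0 := by
      rw [shiftF_val, hTBv, show N - 1 + 1 = N by omega, Nat.mod_self]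
    set z := shiftF N 1 TB with hz
    have hσz : σ z = shiftF N 1 b := by rw [← eB, h.1]
    exact hp z (shiftF N 1 a)
      (by rw [hσz, Fin.lt_def, svB]; omega)
      (by rw [eA, Fin.lt_def, svA, svTA]; omega)
      (by rw [Fin.lt_def, svA]; omega)
      (by rw [hσz, Fin.lt_def, svA, svB]; omega)
      (by rw [hσz, eA, Fin.lt_def, svB, svTA]; omega)

lemma exp_arith {N : ℕ} (hN : 2 ≤ N) (t : ℕ) :
    ((N - t % N) + (N - 1)) % N = (N - (t + 1) % N) % N := by
  have hr : t % N < N := Nat.mod_lt _ (by omega)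
  have h1 : (t + 1) % N = (t % N + 1) % N := by
    rw [Nat.add_mod, Nat.mod_eq_of_lt (show 1 < N by omega)]
  by_cases hc : t % N = N - 1
  · rw [h1, hc, show N - 1 + 1 = N by omega, Nat.mod_self,
      show N - (N - 1) + (N - 1) = N by omega, Nat.mod_self, Nat.sub_zero, Nat.mod_self]
  · have hc2 : t % N + 1 < N := by omega
    rw [h1, Nat.mod_eq_of_lt hc2,
      show N - t % N + (N - 1) = (N - (t % N + 1)) + N by omega, Nat.add_mod_right]

lemma conj_iter {N : ℕ} (hN : 2 ≤ N) (σ : Fin N → Fin N) :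
    ∀ t x, (conj1^[t] σ) x = shiftF N (N - t % N) (σ (shiftF N t x)) := by
  intro t
  induction t with
  | zero =>
    intro x
    simp only [Function.iterate_zero, id_eq]
    rw [Nat.zero_mod, Nat.sub_zero]
    have e1 : shiftF N 0 x = x := by
      apply Fin.ext; rw [shiftF_val, Nat.add_zero, Nat.mod_eq_of_lt x.isLt]
    rw [e1]
    apply Fin.ext
    rw [shiftF_val, Nat.add_mod_right, Nat.mod_eq_of_lt (σ x).isLt]
  | succ t ih =>
    intro x
    rw [Function.iterate_succ_apply']
    show shiftF N (N - 1) ((conj1^[t] σ) (shiftF N 1 x)) = _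
    rw [ih (shiftF N 1 x), shiftF_comp N 1 t x, Nat.add_comm 1 t]
    rw [shiftF_comp N (N - t % N) (N - 1)]
    exact shiftF_congr (exp_arith hN t) _

lemma conj_iter_props {N : ℕ} (hN : 2 ≤ N) {σ : Fin N → Fin N} (h : IsPairing σ)
    (hp : IsPlanarPairing σ) (t : ℕ) :
    IsPairing (conj1^[t] σ) ∧ IsPlanarPairing (conj1^[t] σ) := by
  induction t with
  | zero => exact ⟨h, hp⟩
  | succ t ih =>
    rw [Function.iterate_succ_apply']
    exact ⟨conj1_pairing hN ih.1, conj1_planar hN ih.1 ih.2⟩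

lemma conj_iter_inj {N : ℕ} (hN : 2 ≤ N) {σ τ : Fin N → Fin N} (t : ℕ)
    (h : conj1^[t] σ = conj1^[t] τ) : σ = τ := by
  funext y
  have h1 := congrFun h (shiftF N (N - t % N) y)
  rw [conj_iter hN σ, conj_iter hN τ, shiftF_cancel2 N t y] at h1
  exact shiftF_inj N (N - t % N) h1



lemma interior {N : ℕ} {σ : Fin N → Fin N} (hinv : Function.Involutive σ)
    (hp : IsPlanarPairing σ) {a k : Fin N} (ha : a < σ a) (h1 : a < k) (h2 : k < σ a) :
    a < σ k ∧ σ k < σ a := by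
  have hinj := hinv.injective
  have hka : σ k ≠ a := by
    intro h
    have h' : σ a = k := by rw [← h, hinv]
    rw [h'] at h2; exact lt_irrefl _ h2
  rcases lt_trichotomy (σ k) a with h | h | h
  · exact (hp (σ k) a (by rw [hinv]; exact h.trans h1) ha h (by rw [hinv]; exact h1)
      (by rw [hinv]; exact h2)).elim
  · exact absurd h hka
  · refine ⟨h, ?_⟩
    rcases lt_trichotomy (σ k) (σ a) with h' | h' | h'
    · exact h'
    · exact absurd (hinj h') (ne_of_gt h1)
    · rcases lt_trichotomy k (σ k) with hk | hk | hk
      · exact (hp a k ha hk h1 h2 h').elim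
      · rw [← hk] at h'; exact absurd (h2.trans h') (lt_irrefl _)
      · exact absurd (h2.trans (h'.trans hk)) (lt_irrefl _)

lemma exterior {N : ℕ} {σ : Fin N → Fin N} (hinv : Function.Involutive σ)
    (hp : IsPlanarPairing σ) {a k : Fin N} (ha : a < σ a) (h1 : k < a ∨ σ a < k) :
    σ k < a ∨ σ a < σ k := by
  by_contra h
  push_neg at h
  obtain ⟨h2, h3⟩ := h
  have hka : σ k ≠ a := by
    intro h
    have h' : σ a = k := by rw [← h, hinv]
    rcases h1 with h1 | h1
    · rw [h'] at ha; exact lt_irrefl _ (h1.trans ha)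
    · rw [h'] at h1; exact lt_irrefl _ h1
  have hks : σ k ≠ σ a := by
    intro h
    have hk2 : k = a := hinv.injective h
    rcases h1 with h1 | h1
    · rw [hk2] at h1; exact lt_irrefl _ h1
    · rw [hk2] at h1; exact lt_irrefl _ (ha.trans h1)
  have hin : a < σ k ∧ σ k < σ a := ⟨lt_of_le_of_ne h2 (Ne.symm hka), lt_of_le_of_ne h3 hks⟩
  have := interior hinv hp ha (k := σ k) hin.1 hin.2
  rw [hinv] at this
  rcases h1 with h1 | h1
  · exact absurd (h1.trans this.1) (lt_irrefl _)
  · exact absurd (h1.trans this.2) (lt_irrefl _)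

lemma exists_adjacent {N : ℕ} {σ : Fin N → Fin N} (h : IsPairing σ)
    (hp : IsPlanarPairing σ) (hN : 0 < N) : ∃ i : Fin N, (σ i).val = i.val + 1 := by
  have hinv := h.1
  have hinj := hinv.injective
  set S : Finset (Fin N) := Finset.univ.filter (fun a => a < σ a) with hS
  have hne : S.Nonempty := by
    set z : Fin N := ⟨0, hN⟩
    have hz := h.2 z
    rcases lt_or_gt_of_ne (Ne.symm hz) with hlt | hgt
    · exact ⟨z, by simp [hS, hlt]⟩
    · refine ⟨σ z, by simp [hS]; rw [hinv]; exact hgt⟩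
  obtain ⟨a, haS, hmin⟩ := Finset.exists_min_image S (fun a => (σ a).val - a.val) hne
  have haa : a < σ a := by simpa [hS] using haS
  refine ⟨a, ?_⟩
  by_contra hne2
  have hgap : a.val + 2 ≤ (σ a).val := by
    have : a.val < (σ a).val := haa
    omega
  have hkN : a.val + 1 < N := lt_trans (by omega) (σ a).isLt
  set k : Fin N := ⟨a.val + 1, hkN⟩ with hk
  have hak : a < k := by simp [hk, Fin.lt_def]
  have hks : k < σ a := by simp [hk, Fin.lt_def]; omega
  have ⟨hi1, hi2⟩ := interior hinv hp haa hak hks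
  -- σ k strictly between a and σ a
  have hkk : k ≠ σ k := fun h' => h.2 k h'.symm
  rcases lt_or_gt_of_ne hkk with hlt | hgt
  · -- k < σ k : smaller gap, contradiction with minimality
    have hkS : k ∈ S := by simp [hS, hlt]
    have hm := hmin k hkS
    have v1 : (σ k).val < (σ a).val := hi2
    have v2 : (k:ℕ) < (σ k).val := hlt
    have v3 : (k:ℕ) = a.val + 1 := rfl
    omega
  · -- σ k < k, but a < σ k < k = a+1 : impossible
    have v1 : a.val < (σ k).val := hi1
    have v2 : (σ k).val < k.val := hgt
    have v3 : (k:ℕ) = a.val + 1 := rfl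
    omega



def cA {N : ℕ} (col : Fin N → Fin 3) (ρ : Fin N → Fin N) (c d : Fin 3) : ℕ :=
  (Finset.univ.filter (fun i => col i = c ∧ col (ρ i) = d)).card

lemma fin3_cases (e : Fin 3) : e = 0 ∨ e = 1 ∨ e = 2 := by
  rcases e with ⟨v, h⟩
  simp only [Fin.ext_iff, Fin.val_zero, Fin.val_one]
  norm_num
  omega

lemma cA_symm {N : ℕ} (col : Fin N → Fin 3) {ρ : Fin N → Fin N}
    (hinv : Function.Involutive ρ) (c d : Fin 3) : cA col ρ c d = cA col ρ d c := by
  unfold cA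
  apply Finset.card_bij' (fun i _ => ρ i) (fun i _ => ρ i)
  · intro a ha
    simp only [Finset.mem_filter, Finset.mem_univ, true_and] at ha ⊢
    exact ⟨ha.2, by rw [hinv]; exact ha.1⟩
  · intro a ha
    simp only [Finset.mem_filter, Finset.mem_univ, true_and] at ha ⊢
    exact ⟨ha.2, by rw [hinv]; exact ha.1⟩
  · intro a _; exact hinv a
  · intro a _; exact hinv a

lemma cA_diag {N : ℕ} (col : Fin N → Fin 3) {ρ : Fin N → Fin N}
    (hc : ∀ i, col (ρ i) ≠ col i) (c : Fin 3) : cA col ρ c c = 0 := by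
  unfold cA
  rw [Finset.card_eq_zero, Finset.filter_eq_empty_iff]
  rintro i - ⟨h1, h2⟩
  exact hc i (h2.trans h1.symm)

lemma cA_row {N : ℕ} (col : Fin N → Fin 3) (ρ : Fin N → Fin N) (c : Fin 3) :
    cA col ρ c 0 + cA col ρ c 1 + cA col ρ c 2
      = (Finset.univ.filter (fun i => col i = c)).card := by
  unfold cA
  rw [Finset.card_filter, Finset.card_filter, Finset.card_filter, Finset.card_filter,
    ← Finset.sum_add_distrib, ← Finset.sum_add_distrib]
  apply Finset.sum_congr rfl
  intro i _
  rcases fin3_cases (col (ρ i)) with h | h | h <;>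
    by_cases hc : col i = c <;>
    simp [h, hc]

lemma cA_eq {N : ℕ} (col : Fin N → Fin 3) {σ τ : Fin N → Fin N}
    (hσ : IsPairing σ) (hσc : ∀ i, col (σ i) ≠ col i)
    (hτ : IsPairing τ) (hτc : ∀ i, col (τ i) ≠ col i) (c d : Fin 3) :
    cA col σ c d = cA col τ c d := by
  have r0σ := cA_row col σ 0; have r1σ := cA_row col σ 1; have r2σ := cA_row col σ 2
  have r0τ := cA_row col τ 0; have r1τ := cA_row col τ 1; have r2τ := cA_row col τ 2
  have d0σ := cA_diag col hσc 0; have d1σ := cA_diag col hσc 1; have d2σ := cA_diag col hσc 2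
  have d0τ := cA_diag col hτc 0; have d1τ := cA_diag col hτc 1; have d2τ := cA_diag col hτc 2
  have s01σ := cA_symm col hσ.1 0 1; have s02σ := cA_symm col hσ.1 0 2
  have s12σ := cA_symm col hσ.1 1 2
  have s01τ := cA_symm col hτ.1 0 1; have s02τ := cA_symm col hτ.1 0 2
  have s12τ := cA_symm col hτ.1 1 2
  rcases fin3_cases c with hc | hc | hc <;> rcases fin3_cases d with hd | hd | hd <;>
    subst hc <;> subst hd <;> omega



lemma hit (N a x : ℕ) (hN : 0 < N) (hx : x < N) : (a % N + (x + N - a % N) % N) % N = x := by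
  have h1 : a % N < N := Nat.mod_lt _ hN
  rw [Nat.add_mod_mod]
  rw [show a % N + (x + N - a % N) = x + N by omega, Nat.add_mod_right, Nat.mod_eq_of_lt hx]

lemma addmod_cancel {N b x k : ℕ} (hx : x < N) (hk : k < N) (h : (x + b) % N = (b + k) % N) :
    x = k := by
  have h1 := modAux1 N x b hx
  have h2 := modAux1 N k b hk
  rw [← h1, h, Nat.add_comm b k, h2]

lemma shift_arc {N : ℕ} (t bc k : ℕ) (x : Fin N) :
    (((x : ℕ) + t) % N = (bc + k) % N) ↔ (x : ℕ) = (((bc + (N - t % N)) % N) + k) % N := by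
  have hx := x.isLt
  have hN : 0 < N := x.pos
  constructor
  · intro h
    have h1 := modAux1 N (x : ℕ) t hx
    rw [← h1, h, Nat.mod_add_mod, Nat.mod_add_mod]
    congr 1
    omega
  · intro h
    rw [h, Nat.mod_add_mod ((bc + (N - t % N))) N k,
      Nat.mod_add_mod ((bc + (N - t % N)) + k) N t,
      (Nat.add_mod_mod ((bc + (N - t % N)) + k) t N).symm]
    rw [show bc + (N - t % N) + k + t % N = bc + k + N by
      have := Nat.mod_lt t hN; omega, Nat.add_mod_right]

lemma arc_norm {N : ℕ} (hN : 0 < N) {s : Set (Fin N)} (h : IsCircularArc s) :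
    ∃ b l, b < N ∧ l ≤ N ∧ ∀ x : Fin N, x ∈ s ↔ ∃ k < l, (x : ℕ) = (b + k) % N := by
  obtain ⟨a, l, hs⟩ := h
  have hmem : ∀ x : Fin N, x ∈ s ↔ ∃ k < l, (x : ℕ) = (a + k) % N := by
    intro x; rw [hs]; exact Iff.rfl
  by_cases hl : l ≤ N
  · refine ⟨a % N, l, Nat.mod_lt _ hN, hl, fun x => ?_⟩
    rw [hmem]
    constructor
    · rintro ⟨k, hk, hxk⟩
      exact ⟨k, hk, by rw [hxk, Nat.mod_add_mod]⟩
    · rintro ⟨k, hk, hxk⟩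
      exact ⟨k, hk, by rw [hxk, Nat.mod_add_mod]⟩
  · refine ⟨a % N, N, Nat.mod_lt _ hN, le_refl N, fun x => ?_⟩
    have hx := x.isLt
    constructor
    · intro _
      exact ⟨((x : ℕ) + N - a % N) % N, Nat.mod_lt _ hN, (hit N a (x : ℕ) hN hx).symm⟩
    · intro _
      rw [hmem]
      refine ⟨((x : ℕ) + N - a % N) % N, lt_trans (Nat.mod_lt _ hN) (by omega), ?_⟩
      rw [← Nat.mod_add_mod]
      exact (hit N a (x : ℕ) hN hx).symm

lemma arc_interval {N : ℕ} (hN : 0 < N) {P : Fin N → Prop} {b l : ℕ} (hb : b < N) (hl : l ≤ N)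
    (hs : ∀ x : Fin N, P x ↔ ∃ k < l, (x : ℕ) = (b + k) % N)
    (h0 : ¬ P ⟨0, hN⟩) : b + l ≤ N ∧ ∀ x : Fin N, P x ↔ (b ≤ (x : ℕ) ∧ (x : ℕ) < b + l) := by
  have hbl : b + l ≤ N := by
    by_contra hc
    push_neg at hc
    apply h0
    rw [hs]
    exact ⟨N - b, by omega, by
      show (0 : ℕ) = (b + (N - b)) % N
      rw [show b + (N - b) = N by omega, Nat.mod_self]⟩
  refine ⟨hbl, fun x => ?_⟩
  rw [hs]
  constructor
  · rintro ⟨k, hk, hxk⟩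
    rw [Nat.mod_eq_of_lt (by omega)] at hxk
    omega
  · intro h
    exact ⟨(x : ℕ) - b, by omega, by rw [Nat.mod_eq_of_lt (by omega)]; omega⟩

lemma d_distinct (c : Fin 3) : c ≠ (if c = 0 then 1 else 0) ∧ c ≠ (if c = 2 then 1 else 2) ∧
    (if c = 0 then (1 : Fin 3) else 0) ≠ (if c = 2 then 1 else 2) := by
  rcases fin3_cases c with h | h | h <;> subst h <;> decide

lemma exists_rot_mono {N : ℕ} (hN : 0 < N) (col : Fin N → Fin 3)
    (hcontig : ∀ c : Fin 3, IsCircularArc {i | col i = c}) :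
    ∃ (t : ℕ) (π : Fin 3 → Fin 3), Function.Injective π ∧
      Monotone (fun x : Fin N => π (col (shiftF N t x))) := by
  set z0 : Fin N := ⟨0, hN⟩ with hz0
  set c0 := col z0 with hc0
  obtain ⟨b0, l0, hb0, hl0, hmem0⟩ := arc_norm hN (hcontig c0)
  have hz0mem : z0 ∈ {i | col i = c0} := rfl
  obtain ⟨k0, hk0, _⟩ := (hmem0 z0).1 hz0mem
  have hl0pos : 0 < l0 := lt_of_le_of_lt (Nat.zero_le _) hk0
  refine ⟨b0, ?_⟩
  set col2 : Fin N → Fin 3 := fun x => col (shiftF N b0 x) with hcol2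
  -- the class of c0 under col2 is [0, l0)
  have charc0 : ∀ x : Fin N, col2 x = c0 ↔ (x : ℕ) < l0 := by
    intro x
    rw [hcol2]
    dsimp only
    rw [show (col (shiftF N b0 x) = c0) ↔ (shiftF N b0 x ∈ {i | col i = c0}) from Iff.rfl, hmem0]
    constructor
    · rintro ⟨k, hk, hxk⟩
      rw [shiftF_val] at hxk
      have hkN : k < N := lt_of_lt_of_le hk hl0
      have := addmod_cancel x.isLt hkN hxk
      omega
    · intro h
      exact ⟨(x : ℕ), h, by rw [shiftF_val, Nat.add_comm]⟩
  -- col2 z0 = c0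
  have hcol2z0 : col2 z0 = c0 := (charc0 z0).2 (by show 0 < l0; omega)
  -- each other class is an interval [s, s+m) with l0 ≤ s when nonempty
  have hclass : ∀ c : Fin 3, c ≠ c0 → ∃ s m, s + m ≤ N ∧ (0 < m → l0 ≤ s) ∧
      ∀ x : Fin N, col2 x = c ↔ (s ≤ (x : ℕ) ∧ (x : ℕ) < s + m) := by
    intro c hc
    obtain ⟨bc, lc, hbc, hlc, hmemc⟩ := arc_norm hN (hcontig c)
    have harc : ∀ x : Fin N, col2 x = c ↔ ∃ k < lc, (x : ℕ) = ((bc + (N - b0 % N)) % N + k) % N := by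
      intro x
      rw [hcol2]
      dsimp only
      rw [show (col (shiftF N b0 x) = c) ↔ (shiftF N b0 x ∈ {i | col i = c}) from Iff.rfl, hmemc]
      constructor
      · rintro ⟨k, hk, hxk⟩
        rw [shiftF_val] at hxk
        exact ⟨k, hk, (shift_arc b0 bc k x).1 hxk⟩
      · rintro ⟨k, hk, hxk⟩
        exact ⟨k, hk, by rw [shiftF_val]; exact (shift_arc b0 bc k x).2 hxk⟩
    have h0 : ¬ col2 z0 = c := by rw [hcol2z0]; exact fun h => hc h.symm
    obtain ⟨hsum, hchar⟩ := arc_interval hN (Nat.mod_lt _ hN) hlc harc h0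
    refine ⟨(bc + (N - b0 % N)) % N, lc, hsum, ?_, hchar⟩
    intro hm
    set s := (bc + (N - b0 % N)) % N with hsdef
    have hsN : s < N := by omega
    have hsc : col2 ⟨s, hsN⟩ = c := (hchar ⟨s, hsN⟩).2 (by constructor <;> simp <;> omega)
    by_contra hcon
    push_neg at hcon
    have : col2 ⟨s, hsN⟩ = c0 := (charc0 ⟨s, hsN⟩).2 (by simpa using hcon)
    rw [this] at hsc
    exact hc hsc.symm
  -- get the two other colors
  set d1 : Fin 3 := if c0 = 0 then 1 else 0 with hd1
  set d2 : Fin 3 := if c0 = 2 then 1 else 2 with hd2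
  obtain ⟨hne1, hne2, hne12⟩ := d_distinct c0
  obtain ⟨s1, m1, hsum1, hge1, hchar1⟩ := hclass d1 (Ne.symm hne1)
  obtain ⟨s2, m2, hsum2, hge2, hchar2⟩ := hclass d2 (Ne.symm hne2)
  -- main argument, symmetric in the two colors
  have main : ∀ (d e : Fin 3) (sd md se me : ℕ), d ≠ c0 → e ≠ c0 → d ≠ e →
      sd + md ≤ N → se + me ≤ N → (0 < md → l0 ≤ sd) → (0 < me → l0 ≤ se) →
      (∀ x : Fin N, col2 x = d ↔ (sd ≤ (x : ℕ) ∧ (x : ℕ) < sd + md)) →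
      (∀ x : Fin N, col2 x = e ↔ (se ≤ (x : ℕ) ∧ (x : ℕ) < se + me)) →
      sd ≤ se →
      ∃ π : Fin 3 → Fin 3, Function.Injective π ∧ Monotone (fun x => π (col2 x)) := by
    intro d e sd md se me hdc0 hec0 hde hsumd hsume hged hgee hchard hchare hdle
    set π : Fin 3 → Fin 3 := fun x => if x = c0 then 0 else if x = d then 1 else 2 with hπ
    have πval : ∀ c : Fin 3, ((π c : Fin 3) : ℕ) = if c = c0 then 0 else if c = d then 1 else 2 := by
      intro c; rw [hπ]; dsimp only; split_ifs <;> rfl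
    have hthird : ∀ f : Fin 3, f ≠ c0 → f ≠ d → f = e := by
      intro f h1 h2
      have hc1 : c0 ≠ d := fun h => hdc0 h.symm
      have hc2 : c0 ≠ e := fun h => hec0 h.symm
      simp only [Fin.ext_iff] at h1 h2 hde hc1 hc2 ⊢
      have v1 := f.isLt; have v2 := c0.isLt; have v3 := d.isLt; have v4 := e.isLt
      omega
    have hsep : 0 < me → sd + md ≤ se := by
      intro hme
      rcases Nat.eq_zero_or_pos md with h | h
      · omega
      have hseN : se < N := by omega
      have h1 : col2 ⟨se, hseN⟩ = e := (hchare ⟨se, hseN⟩).2 (by constructor <;> simp <;> omega)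
      have h2 : ¬ col2 ⟨se, hseN⟩ = d := by rw [h1]; exact fun h => hde h.symm
      rw [hchard] at h2
      push_neg at h2
      simp only at h2
      omega
    refine ⟨π, ?_, ?_⟩
    · intro x y hxy
      by_cases hx1 : x = c0
      · by_cases hy1 : y = c0
        · rw [hx1, hy1]
        · exfalso
          have hv := congrArg Fin.val hxy
          rw [πval, πval, if_pos hx1, if_neg hy1] at hv
          split_ifs at hv <;> omega
      · by_cases hy1 : y = c0
        · exfalso
          have hv := congrArg Fin.val hxy
          rw [πval, πval, if_pos hy1, if_neg hx1] at hv
          split_ifs at hv <;> omega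
        · by_cases hx2 : x = d
          · by_cases hy2 : y = d
            · rw [hx2, hy2]
            · exfalso
              have hv := congrArg Fin.val hxy
              rw [πval, πval, if_neg hx1, if_neg hy1, if_pos hx2, if_neg hy2] at hv
              omega
          · by_cases hy2 : y = d
            · exfalso
              have hv := congrArg Fin.val hxy
              rw [πval, πval, if_neg hx1, if_neg hy1, if_neg hx2, if_pos hy2] at hv
              omega
            · rw [hthird x hx1 hx2, hthird y hy1 hy2]
    · intro x y hxy
      have hxy' : (x : ℕ) ≤ (y : ℕ) := hxy
      rw [Fin.le_def, πval, πval]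
      by_cases hx0 : col2 x = c0
      · rw [if_pos hx0]
        omega
      by_cases hy0 : col2 y = c0
      · exfalso
        have hyl : (y : ℕ) < l0 := (charc0 y).1 hy0
        by_cases hxd : col2 x = d
        · have h1 := (hchard x).1 hxd
          have h2 : l0 ≤ sd := hged (by omega)
          omega
        · have hxe : col2 x = e := hthird _ hx0 hxd
          have h1 := (hchare x).1 hxe
          have h2 : l0 ≤ se := hgee (by omega)
          omega
      by_cases hxd : col2 x = d
      · rw [if_neg hx0, if_pos hxd, if_neg hy0]
        split_ifs <;> omega
      by_cases hyd : col2 y = d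
      · exfalso
        have hxe : col2 x = e := hthird _ hx0 hxd
        have h1 := (hchare x).1 hxe
        have h2 := (hchard y).1 hyd
        have h3 : sd + md ≤ se := hsep (by omega)
        omega
      · rw [if_neg hx0, if_neg hxd, if_neg hy0, if_neg hyd]
  rcases le_total s1 s2 with hle | hle
  · obtain ⟨π, h1, h2⟩ := main d1 d2 s1 m1 s2 m2 (Ne.symm hne1) (Ne.symm hne2) hne12
      hsum1 hsum2 hge1 hge2 hchar1 hchar2 hle
    exact ⟨π, h1, h2⟩
  · obtain ⟨π, h1, h2⟩ := main d2 d1 s2 m2 s1 m1 (Ne.symm hne2) (Ne.symm hne1) (Ne.symm hne12)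
      hsum2 hsum1 hge2 hge1 hchar2 hchar1 hle
    exact ⟨π, h1, h2⟩



lemma core : ∀ N : ℕ, N % 2 = 0 → ∀ col : Fin N → Fin 3, Monotone col →
    ∀ σ τ : Fin N → Fin N, IsPairing σ → IsPlanarPairing σ → (∀ i, col (σ i) ≠ col i) →
    IsPairing τ → IsPlanarPairing τ → (∀ i, col (τ i) ≠ col i) → σ = τ := by
  intro N
  induction N using Nat.strong_induction_on with
  | _ N IH =>
  intro hN2 col hcol σ τ hσ hσp hσc hτ hτp hτc
  rcases Nat.eq_zero_or_pos N with h0 | hpos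
  · subst h0; funext k; exact k.elim0
  obtain ⟨i, hvi⟩ := exists_adjacent hσ hσp hpos
  set j := σ i with hj
  have hvj : (j : ℕ) = i.val + 1 := hvi
  have hij : i < j := by rw [Fin.lt_def]; omega
  have hc12 : col i < col j := lt_of_le_of_ne (hcol (le_of_lt hij)) (Ne.symm (hσc i))
  have hσj : σ j = i := by rw [hj, hσ.1]
  -- The partner of i under τ is also j.
  have hτi : τ i = j := by
    by_contra hne
    have hτii : τ i ≠ i := hτ.2 i
    have hzero : cA col τ (col i) (col j) = 0 := by
      unfold cA
      rw [Finset.card_eq_zero, Finset.filter_eq_empty_iff]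
      rintro i' - ⟨h1, h2⟩
      have hvgt : i < τ i' := by
        refine lt_of_not_ge fun hle => ?_
        have := hcol hle
        rw [h2] at this
        exact absurd hc12 (not_lt.2 this)
      rcases hτii.lt_or_gt with hu | hu
      · -- τ i < i : chord (τ i, i), exterior argument
        have hτa : τ i < τ (τ i) := by rw [hτ.1]; exact hu
        have hcu : col (τ i) < col i := lt_of_le_of_ne (hcol (le_of_lt hu)) (hτc i)
        have hext := exterior hτ.1 hτp hτa (k := τ i') (Or.inr (by rw [hτ.1]; exact hvgt))
        rw [hτ.1 i', hτ.1 i] at hext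
        rcases hext with hlt | hgt
        · have h3 := hcol (le_of_lt hlt)
          rw [h1] at h3
          exact absurd (lt_of_le_of_lt h3 hcu) (lt_irrefl _)
        · have h3 : col j ≤ col i' := by
            apply hcol
            rw [Fin.le_def]
            rw [Fin.lt_def] at hgt
            omega
          rw [h1] at h3
          exact absurd hc12 (not_lt.2 h3)
      · -- i < τ i
        have hvu : i.val + 2 ≤ (τ i).val := by
          have h3 : i.val < (τ i).val := hu
          have h4 : (τ i).val ≠ i.val + 1 := by
            intro h5
            exact hne (Fin.ext (by rw [h5, hvj]))
          omega
        have hjτ : j < τ i := by rw [Fin.lt_def]; omega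
        have hcu : col j ≤ col (τ i) := hcol (le_of_lt hjτ)
        rcases eq_or_lt_of_le hcu with hE | hL
        · -- col (τ i) = col j : impossible
          have hint := interior hτ.1 hτp hu hij hjτ
          have l1 : col j ≤ col (τ j) := by
            apply hcol
            rw [Fin.le_def]
            have h6 : (i : ℕ) < (τ j).val := hint.1
            omega
          have l2 : col (τ j) ≤ col (τ i) := hcol (le_of_lt hint.2)
          rw [← hE] at l2
          exact absurd (le_antisymm l2 l1) (hτc j)
        · -- col j < col (τ i)
          have hvlt : τ i' < τ i := by
            refine lt_of_not_ge fun hle => ?_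
            have h3 := hcol hle
            rw [h2] at h3
            exact absurd hL (not_lt.2 h3)
          have hint := interior hτ.1 hτp hu hvgt hvlt
          rw [hτ.1] at hint
          have h3 : col j ≤ col i' := by
            apply hcol
            rw [Fin.le_def]
            have h6 : (i : ℕ) < (i' : ℕ) := hint.1
            omega
          rw [h1] at h3
          exact absurd hc12 (not_lt.2 h3)
    have hone : 0 < cA col σ (col i) (col j) := by
      unfold cA
      rw [Finset.card_pos]
      exact ⟨i, Finset.mem_filter.2 ⟨Finset.mem_univ i, rfl, rfl⟩⟩
    have := cA_eq col hσ hσc hτ hτc (col i) (col j)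
    omega
  have hτj : τ j = i := by rw [← hτi, hτ.1]
  -- conclude by induction after removing the chord {i, j}
  by_cases hN4 : N < 4
  · -- N = 2
    have hN2' : N = 2 := by omega
    have hiv : (i : ℕ) = 0 := by have := j.isLt; omega
    have hjv : (j : ℕ) = 1 := by omega
    funext k
    have hk := k.isLt
    have hk2 : (k:ℕ) = 0 ∨ (k:ℕ) = 1 := by omega
    rcases hk2 with h | h
    · have : k = i := Fin.ext (by omega)
      rw [this, ← hj, hτi]
    · have : k = j := Fin.ext (by omega)
      rw [this, hσj, hτj]
  · -- N ≥ 4 : removal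
    push_neg at hN4
    set I := (i : ℕ) with hIdef
    have hI1 : I + 1 < N := by have := j.isLt; omega
    set e : Fin (N-2) → Fin N := fun x =>
      if h : (x : ℕ) < I then ⟨x, by have := x.isLt; omega⟩
      else ⟨(x : ℕ) + 2, by have := x.isLt; omega⟩ with he
    set dd : Fin N → Fin (N-2) := fun y =>
      if h : (y : ℕ) < I then ⟨y, by omega⟩
      else ⟨(y : ℕ) - 2, by have := y.isLt; omega⟩ with hdd
    have heval : ∀ x, ((e x : Fin N) : ℕ) = if (x : ℕ) < I then (x : ℕ) else (x : ℕ) + 2 := by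
      intro x; rw [he]; dsimp only; split_ifs <;> rfl
    have hmono : StrictMono e := by
      intro x y hxy
      rw [Fin.lt_def, heval, heval]
      rw [Fin.lt_def] at hxy
      split_ifs <;> omega
    have hdval : ∀ y : Fin N, ((dd y : Fin (N-2)) : ℕ) = if (y : ℕ) < I then (y : ℕ) else (y : ℕ) - 2 := by
      intro y; rw [hdd]; dsimp only; split_ifs <;> rfl
    have hde : ∀ x, dd (e x) = x := by
      intro x
      rw [Fin.ext_iff, hdval, heval]
      have := x.isLt
      split_ifs <;> omega
    have hed : ∀ y : Fin N, (y : ℕ) ≠ I → (y : ℕ) ≠ I + 1 → e (dd y) = y := by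
      intro y hy1 hy2
      rw [Fin.ext_iff, heval, hdval]
      have := y.isLt
      split_ifs <;> omega
    have hegood : ∀ x, ((e x : Fin N) : ℕ) ≠ I ∧ ((e x : Fin N) : ℕ) ≠ I + 1 := by
      intro x
      rw [heval]
      split_ifs <;> omega
    have hgood : ∀ (ρ : Fin N → Fin N), Function.Involutive ρ → ρ i = j →
        ∀ y : Fin N, (y : ℕ) ≠ I → (y : ℕ) ≠ I + 1 → (ρ y : ℕ) ≠ I ∧ (ρ y : ℕ) ≠ I + 1 := by
      intro ρ hinv hρi y hy1 hy2
      constructor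
      · intro h
        have h1 : ρ y = i := Fin.ext h
        have h2 : y = ρ i := by rw [← h1, hinv]
        rw [hρi] at h2
        exact hy2 (by rw [h2, hvj])
      · intro h
        have h1 : ρ y = j := Fin.ext (by rw [h, hvj])
        have h2 : y = ρ j := by rw [← h1, hinv]
        have h3 : ρ j = i := by rw [← hρi, hinv]
        rw [h3] at h2
        exact hy1 (by rw [h2])
    set σ' : Fin (N-2) → Fin (N-2) := fun x => dd (σ (e x)) with hσ'
    set τ' : Fin (N-2) → Fin (N-2) := fun x => dd (τ (e x)) with hτ'
    have keyσ : ∀ x, e (σ' x) = σ (e x) := by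
      intro x
      rw [hσ']
      exact hed _ (hgood σ hσ.1 hj.symm _ (hegood x).1 (hegood x).2).1
        (hgood σ hσ.1 hj.symm _ (hegood x).1 (hegood x).2).2
    have keyτ : ∀ x, e (τ' x) = τ (e x) := by
      intro x
      rw [hτ']
      exact hed _ (hgood τ hτ.1 hτi _ (hegood x).1 (hegood x).2).1
        (hgood τ hτ.1 hτi _ (hegood x).1 (hegood x).2).2
    have hpair : ∀ (ρ : Fin N → Fin N) (ρ' : Fin (N-2) → Fin (N-2)),
        IsPairing ρ → (∀ x, ρ' x = dd (ρ (e x))) → (∀ x, e (ρ' x) = ρ (e x)) → IsPairing ρ' := by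
      intro ρ ρ' hρ hdef hkey
      constructor
      · intro x
        rw [hdef (ρ' x), hkey x, hρ.1, hde]
      · intro x hx
        have h1 : e (ρ' x) = e x := congrArg e hx
        rw [hkey x] at h1
        exact hρ.2 (e x) h1
    have hplanar : ∀ (ρ : Fin N → Fin N) (ρ' : Fin (N-2) → Fin (N-2)),
        IsPlanarPairing ρ → (∀ x, e (ρ' x) = ρ (e x)) → IsPlanarPairing ρ' := by
      intro ρ ρ' hρp hkey
      intro a b h1 h2 h3 h4 h5
      apply hρp (e a) (e b)
      · rw [← hkey a]; exact hmono h1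
      · rw [← hkey b]; exact hmono h2
      · exact hmono h3
      · rw [← hkey a]; exact hmono h4
      · rw [← hkey a, ← hkey b]; exact hmono h5
    have hcol' : Monotone (fun x => col (e x)) := fun a b hab => hcol (hmono.monotone hab)
    have hc' : ∀ (ρ : Fin N → Fin N) (ρ' : Fin (N-2) → Fin (N-2)),
        (∀ y, col (ρ y) ≠ col y) → (∀ x, e (ρ' x) = ρ (e x)) →
        ∀ x, col (e (ρ' x)) ≠ col (e x) := by
      intro ρ ρ' hρc hkey x
      rw [hkey x]
      exact hρc (e x)
    have hind := IH (N - 2) (by omega) (by omega) (fun x => col (e x)) hcol' σ' τ'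
      (hpair σ σ' hσ (fun x => rfl) keyσ) (hplanar σ σ' hσp keyσ) (hc' σ σ' hσc keyσ)
      (hpair τ τ' hτ (fun x => rfl) keyτ) (hplanar τ τ' hτp keyτ) (hc' τ τ' hτc keyτ)
    funext k
    by_cases hk1 : k = i
    · rw [hk1, hτi, ← hj]
    by_cases hk2 : k = j
    · rw [hk2, hσj, hτj]
    have hkv1 : (k : ℕ) ≠ I := fun h => hk1 (Fin.ext h)
    have hkv2 : (k : ℕ) ≠ I + 1 := fun h => hk2 (Fin.ext (by rw [h, hvj]))
    have h1 : σ' (dd k) = τ' (dd k) := congrFun hind (dd k)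
    calc σ k = σ (e (dd k)) := by rw [hed k hkv1 hkv2]
      _ = e (σ' (dd k)) := (keyσ (dd k)).symm
      _ = e (τ' (dd k)) := by rw [h1]
      _ = τ (e (dd k)) := keyτ (dd k)
      _ = τ k := by rw [hed k hkv1 hkv2]


end TPPU

theorem tripartite_planar_pairing_unique (n : ℕ) (col : Fin (2 * n) → Fin 3)
    (hcontig : ∀ c : Fin 3, IsCircularArc {i | col i = c})
    (σ τ : Fin (2 * n) → Fin (2 * n))
    (hσ : IsPairing σ) (hσp : IsPlanarPairing σ) (hσc : ∀ i, col (σ i) ≠ col i)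
    (hτ : IsPairing τ) (hτp : IsPlanarPairing τ) (hτc : ∀ i, col (τ i) ≠ col i) :
    σ = τ := by
  rcases Nat.eq_zero_or_pos n with h0 | hpos
  · subst h0
    funext k
    exact absurd k.isLt (by omega)
  · have hN2 : 2 ≤ 2 * n := by omega
    have hNpos : 0 < 2 * n := by omega
    obtain ⟨t, π, hπinj, hmono⟩ := TPPU.exists_rot_mono hNpos col hcontig
    set col2 : Fin (2*n) → Fin 3 := fun x => π (col (TPPU.shiftF (2*n) t x)) with hcol2
    set σ' := TPPU.conj1^[t] σ with hσ'
    set τ' := TPPU.conj1^[t] τ with hτ'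
    have hσprops := TPPU.conj_iter_props hN2 hσ hσp t
    have hτprops := TPPU.conj_iter_props hN2 hτ hτp t
    have hcc : ∀ (ρ : Fin (2*n) → Fin (2*n)), (∀ i, col (ρ i) ≠ col i) →
        ∀ x, col2 ((TPPU.conj1^[t] ρ) x) ≠ col2 x := by
      intro ρ hρc x
      rw [TPPU.conj_iter hN2 ρ t x, hcol2]
      dsimp only
      rw [TPPU.shiftF_cancel2]
      intro h
      exact hρc (TPPU.shiftF (2*n) t x) (hπinj h)
    have hfin := TPPU.core (2*n) (by omega) col2 hmono σ' τ' hσprops.1 hσprops.2 (hcc σ hσc)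
      hτprops.1 hτprops.2 (hcc τ hτc)
    rw [hσ', hτ'] at hfin
    exact TPPU.conj_iter_inj hN2 t hfin
end
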